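/- arXiv:0906.2318 — 2 statements merged into one kernel-verified Lean document; each statement's English description precedes it below -/
import Mathlib

section
/- Let X = (X_t)_{t≥0} be a càdlàg process adapted to 𝔽. Then X satisfies the no arbitrage property with respect to the Cheridito class Π(𝔽) if and only if for every h > 0, every pair of bounded 𝔽-stopping times τ₀, τ₁ with τ₁ ≥ τ₀ + h, and every event A ∈ F_{τ₀}, the random variable 1_A·(X_{τ₁} − X_{τ₀}) belongs to L⁰_{+−}. -/
open MeasureTheory ProbabilityTheory Filter Set
open scoped NNReal ENNReal

variable {Ω : Type*} {m0 : MeasurableSpace Ω}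

/-- A simple predictable integrand with bounded support for the filtration `ℱ`:
`H = g₀ 1_{{0}} + ∑_{j=1}^{n-1} g_j 1_{(τ_j, τ_{j+1}]}` with `n ≥ 2`,
`0 ≤ τ₁ ≤ ⋯ ≤ τ_n` stopping times, `τ_n` bounded, and `g_j` being `F_{τ_j}`-measurable. -/
structure SimpleStrategy (ℱ : MeasureTheory.Filtration ℝ≥0 m0) where
  n : ℕ
  two_le : 2 ≤ n
  g0 : ℝ
  τ : ℕ → Ω → ℝ≥0
  g : ℕ → Ω → ℝ
  stopping : ∀ j, 1 ≤ j → j ≤ n → MeasureTheory.IsStoppingTime ℱ (fun ω => (τ j ω : WithTop ℝ≥0))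
  mono : ∀ j, 1 ≤ j → j < n → ∀ ω, τ j ω ≤ τ (j + 1) ω
  bounded : ∃ T : ℝ≥0, ∀ ω, τ n ω ≤ T
  g_meas : ∀ j (h1 : 1 ≤ j) (h2 : j < n),
    Measurable[(stopping j h1 h2.le).measurableSpace] (g j)

/-- terminal gain `(H ⬝ X)_∞ = ∑_{j=1}^{n-1} g_j (X_{τ_{j+1}} - X_{τ_j})`. -/
def SimpleStrategy.gains {ℱ : MeasureTheory.Filtration ℝ≥0 m0}
    (H : SimpleStrategy ℱ) (X : ℝ≥0 → Ω → ℝ) (ω : Ω) : ℝ :=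
  ∑ j ∈ Finset.Ico 1 H.n, H.g j ω * (X (H.τ (j + 1) ω) ω - X (H.τ j ω) ω)

/-- membership in `Sʰ(𝔽)` : the jump times are at least `h` apart. -/
def SimpleStrategy.Spaced {ℱ : MeasureTheory.Filtration ℝ≥0 m0}
    (H : SimpleStrategy ℱ) (h : ℝ≥0) : Prop :=
  ∀ j, 1 ≤ j → j < H.n → ∀ ω, H.τ j ω + h ≤ H.τ (j + 1) ω

/-- `H` is an arbitrage for `X` under `μ`. -/
def IsArbitrage {ℱ : MeasureTheory.Filtration ℝ≥0 m0} (μ : MeasureTheory.Measure Ω)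
    (X : ℝ≥0 → Ω → ℝ) (H : SimpleStrategy ℱ) : Prop :=
  (∀ᵐ ω ∂μ, 0 ≤ H.gains X ω) ∧ 0 < μ {ω | 0 < H.gains X ω}

/-- no arbitrage in the class `S(𝔽)` of simple predictable integrands of bounded support. -/
def NoArbitrageSimple (μ : MeasureTheory.Measure Ω) (ℱ : MeasureTheory.Filtration ℝ≥0 m0)
    (X : ℝ≥0 → Ω → ℝ) : Prop :=
  ¬ ∃ H : SimpleStrategy ℱ, IsArbitrage μ X H

/-- no arbitrage in the Cheridito class `Π(𝔽) = ⋃_{h>0} Sʰ(𝔽)`. -/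
def NoArbitrageCC (μ : MeasureTheory.Measure Ω) (ℱ : MeasureTheory.Filtration ℝ≥0 m0)
    (X : ℝ≥0 → Ω → ℝ) : Prop :=
  ¬ ∃ (h : ℝ≥0) (H : SimpleStrategy ℱ), 0 < h ∧ H.Spaced h ∧ IsArbitrage μ X H

/-- `η ∈ L⁰_{+-}` : `η` is neither a nonnegative r.v. that is positive with positive
probability, nor a nonpositive r.v. that is negative with positive probability. -/
def MemLzeroPM (μ : MeasureTheory.Measure Ω) (η : Ω → ℝ) : Prop :=
  ¬ ((∀ᵐ ω ∂μ, 0 ≤ η ω) ∧ 0 < μ {ω | 0 < η ω}) ∧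
  ¬ ((∀ᵐ ω ∂μ, η ω ≤ 0) ∧ 0 < μ {ω | η ω < 0})

/-- all paths are right continuous with left limits. -/
def IsCadlag (X : ℝ≥0 → Ω → ℝ) : Prop :=
  ∀ ω, (∀ t : ℝ≥0, ContinuousWithinAt (fun s => X s ω) (Set.Ici t) t) ∧
    (∀ t : ℝ≥0, 0 < t →
      ∃ l : ℝ, Filter.Tendsto (fun s => X s ω) (nhdsWithin t (Set.Iio t)) (nhds l))

/-- a standard Brownian motion w.r.t. the filtration `ℱ`. -/
def IsStandardBM (μ : MeasureTheory.Measure Ω) (ℱ : MeasureTheory.Filtration ℝ≥0 m0)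
    (B : ℝ≥0 → Ω → ℝ) : Prop :=
  MeasureTheory.Adapted ℱ B ∧ (∀ ω, B 0 ω = 0) ∧ (∀ ω, Continuous fun t => B t ω) ∧
  ∀ s t : ℝ≥0, s < t →
    ProbabilityTheory.Indep
      (MeasurableSpace.comap (fun ω => B t ω - B s ω) (inferInstance : MeasurableSpace ℝ))
      (ℱ s) μ ∧
    MeasureTheory.Measure.map (fun ω => B t ω - B s ω) μ =
      ProbabilityTheory.gaussianReal 0 (t - s)

/-! With `g = ±1_A`, the one-step strategy `g 1_{(τ₀, τ₁]}` has gain `±1_A (X_{τ₁} - X_{τ₀})`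
and lies in the Cheridito class when `τ₁ ≥ τ₀ + h`, so no arbitrage puts this gain in `L⁰_{+-}`.

Conversely, a one-step arbitrage `g (X_{τ₁} - X_{τ₀})` with `F_{τ₀}`-measurable `g` gives
one on `A = {g > 0}` or on `A = {g < 0}`. For several trades, if the total gain `G + Y` is an
arbitrage but the gain `G` of all trades except the last one is not, then the last trade `Y`,
restricted to the `F_{τ_k}`-event `{G ≤ 0}`, is a one-step arbitrage; induction on the number of
trades concludes. Right-continuity makes `X` progressive, so that `X_τ` is `F_τ`-measurable. -/

open scoped Topology

section Progressive

variable {β : Type*} [TopologicalSpace β] [TopologicalSpace.PseudoMetrizableSpace β]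
  [MeasurableSpace β] [BorelSpace β]

lemma tendsto_min_dyadic_nhdsWithin_Ici {i s : ℝ≥0} (hs : s ≤ i) :
    Tendsto (fun n : ℕ => min i ((⌊s * 2 ^ n⌋₊ + 1 : ℝ≥0) / 2 ^ n)) atTop (𝓝[≥] s) := by
  have two_pow_pos : ∀ n : ℕ, (0 : ℝ≥0) < 2 ^ n := fun n => pow_pos two_pos n
  have lower : ∀ n : ℕ, s ≤ min i ((⌊s * 2 ^ n⌋₊ + 1 : ℝ≥0) / 2 ^ n) := fun n =>
    le_min hs <| (le_div_iff₀ (two_pow_pos n)).2 (Nat.lt_floor_add_one _).le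
  have upper : ∀ n : ℕ, min i ((⌊s * 2 ^ n⌋₊ + 1 : ℝ≥0) / 2 ^ n) ≤ s + 2⁻¹ ^ n := by
    intro n
    refine (min_le_right _ _).trans ?_
    rw [div_le_iff₀ (two_pow_pos n), add_mul, ← mul_pow, inv_mul_cancel₀ two_ne_zero, one_pow]
    gcongr
    exact Nat.floor_le zero_le
  have hlim : Tendsto (fun n : ℕ => s + (2⁻¹ : ℝ≥0) ^ n) atTop (𝓝 s) := by
    simpa using tendsto_const_nhds.add
      (NNReal.tendsto_pow_atTop_nhds_zero_of_lt_one (r := 2⁻¹) (by norm_num))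
  exact tendsto_nhdsWithin_of_tendsto_nhds_of_eventually_within _
    (tendsto_of_tendsto_of_tendsto_of_le_of_le tendsto_const_nhds hlim lower upper)
    (Eventually.of_forall lower)

/-- On `[0, i] × Ω`, `X` is the pointwise limit of `X` sampled at the dyadic points just
to the right of `t` (capped at `i`), each of which takes countably many values. -/
lemma MeasureTheory.Adapted.isProgressive_of_continuousWithinAt_Ici {ℱ : Filtration ℝ≥0 m0}
    {X : ℝ≥0 → Ω → β} (hX : Adapted ℱ X)
    (hright : ∀ ω t, ContinuousWithinAt (fun s => X s ω) (Ici t) t) :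
    IsProgressive ℱ X := by
  intro i
  let m' : MeasurableSpace (Iic i × Ω) := Subtype.instMeasurableSpace.prod (ℱ i)
  have hsnd : Measurable[m', ℱ i] (fun p : Iic i × Ω => p.2) := @measurable_snd _ _ _ (ℱ i)
  have hfst : Measurable[m'] (fun p : Iic i × Ω => (p.1 : ℝ≥0)) :=
    measurable_subtype_coe.comp (@measurable_fst _ _ _ (ℱ i))
  have hsampled : ∀ n : ℕ, Measurable[m']
      (fun p : Iic i × Ω => X (min i ((⌊(p.1 : ℝ≥0) * 2 ^ n⌋₊ + 1 : ℝ≥0) / 2 ^ n)) p.2) := by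
    intro n
    have hgrid : Measurable[(ℱ i).prod ⊤]
        (fun q : Ω × ℕ => X (min i ((q.2 + 1 : ℝ≥0) / 2 ^ n)) q.1) :=
      measurable_from_prod_countable_left (m := ℱ i) fun k =>
        (hX (min i ((k + 1 : ℝ≥0) / 2 ^ n))).mono (ℱ.mono (min_le_left _ _)) le_rfl
    have hindex : Measurable[m', (ℱ i).prod ⊤]
        (fun p : Iic i × Ω => (p.2, ⌊(p.1 : ℝ≥0) * 2 ^ n⌋₊)) :=
      hsnd.prodMk (Nat.measurable_floor.comp (hfst.mul measurable_const))
    exact (hgrid.comp hindex :)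
  refine measurable_of_tendsto_metrizable' atTop hsampled (tendsto_pi_nhds.2 fun p => ?_)
  exact (hright p.2 p.1).tendsto.comp (tendsto_min_dyadic_nhdsWithin_Ici p.1.2)

end Progressive

section Gains

variable {μ : Measure Ω}

def IsArbitrageGain (μ : Measure Ω) (η : Ω → ℝ) : Prop :=
  (∀ᵐ ω ∂μ, 0 ≤ η ω) ∧ 0 < μ {ω | 0 < η ω}

lemma isArbitrage_iff {ℱ : Filtration ℝ≥0 m0} {X : ℝ≥0 → Ω → ℝ} {H : SimpleStrategy ℱ} :
    IsArbitrage μ X H ↔ IsArbitrageGain μ (H.gains X) :=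
  Iff.rfl

lemma measure_pos_eq_zero_of_not_isArbitrageGain {η : Ω → ℝ} (h : ¬ IsArbitrageGain μ η)
    (hη : ∀ᵐ ω ∂μ, 0 ≤ η ω) : μ {ω | 0 < η ω} = 0 :=
  nonpos_iff_eq_zero.1 (not_lt.1 fun hpos => h ⟨hη, hpos⟩)

lemma memLzeroPM_iff {η : Ω → ℝ} :
    MemLzeroPM μ η ↔ ¬ IsArbitrageGain μ η ∧ ¬ IsArbitrageGain μ (fun ω => -η ω) := by
  simp only [MemLzeroPM, IsArbitrageGain, neg_nonneg, Left.neg_pos_iff]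

lemma measure_pos_of_subset_union_null {s t N : Set Ω} (hs : 0 < μ s) (hsub : s ⊆ t ∪ N)
    (hN : μ N = 0) : 0 < μ t :=
  pos_iff_ne_zero.2 fun ht => hs.ne' (measure_mono_null hsub (measure_union_null ht hN))

lemma IsArbitrageGain.indicator_of_add {G Y : Ω → ℝ}
    (h : IsArbitrageGain μ (fun ω => G ω + Y ω)) (hG : ¬ IsArbitrageGain μ G) :
    IsArbitrageGain μ ({ω | G ω ≤ 0}.indicator Y) := by
  refine ⟨?_, ?_⟩
  · filter_upwards [h.1] with ω hω
    rw [indicator_apply]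
    split_ifs with hle
    · linarith [show G ω ≤ 0 from hle]
    · exact le_rfl
  have hcover : ∀ ω, G ω ≤ 0 → 0 < Y ω → 0 < {ω | G ω ≤ 0}.indicator Y ω := fun ω hle hY => by
    rwa [indicator_of_mem (show ω ∈ {ω | G ω ≤ 0} from hle)]
  by_cases hGnn : ∀ᵐ ω ∂μ, 0 ≤ G ω
  · refine measure_pos_of_subset_union_null h.2 (fun ω hω => ?_)
      (measure_pos_eq_zero_of_not_isArbitrageGain hG hGnn)
    by_cases hle : G ω ≤ 0
    · exact Or.inl (hcover ω hle (by simp only [mem_ofPred_eq] at hω; linarith))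
    · exact Or.inr (not_le.1 hle)
  · have hneg : 0 < μ {ω | G ω < 0} := by
      simpa only [ae_iff, not_le, pos_iff_ne_zero] using hGnn
    refine measure_pos_of_subset_union_null hneg (fun ω hω => ?_) (ae_iff.1 h.1)
    by_cases hsum : 0 ≤ G ω + Y ω
    · exact Or.inl (hcover ω (le_of_lt hω) (by simp only [mem_ofPred_eq] at hω; linarith))
    · exact Or.inr hsum

lemma not_isArbitrageGain_mul {m : MeasurableSpace Ω} {D g : Ω → ℝ}
    (hD : ∀ A, MeasurableSet[m] A → MemLzeroPM μ (A.indicator D)) (hg : Measurable[m] g) :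
    ¬ IsArbitrageGain μ (fun ω => g ω * D ω) := by
  rintro ⟨hnonneg, hpos⟩
  set Apos := {ω | 0 < g ω}
  set Aneg := {ω | g ω < 0}
  have hposNull : μ {ω | 0 < Apos.indicator D ω} = 0 := by
    refine measure_pos_eq_zero_of_not_isArbitrageGain
      (memLzeroPM_iff.1 (hD Apos (hg measurableSet_Ioi))).1 ?_
    filter_upwards [hnonneg] with ω hω
    rw [indicator_apply]
    split_ifs with hgω
    · exact nonneg_of_mul_nonneg_right (by linarith) hgω
    · exact le_rfl
  have hnegNull : μ {ω | 0 < -Aneg.indicator D ω} = 0 := by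
    refine measure_pos_eq_zero_of_not_isArbitrageGain
      (memLzeroPM_iff.1 (hD Aneg (hg measurableSet_Iio))).2 ?_
    filter_upwards [hnonneg] with ω hω
    rw [indicator_apply]
    split_ifs with hgω
    · exact neg_nonneg.2 (nonpos_of_mul_nonneg_right (by linarith) hgω)
    · simp
  refine hpos.ne' (measure_mono_null (fun ω hω => ?_) (measure_union_null hposNull hnegNull))
  have hω : 0 < g ω * D ω := hω
  rcases lt_trichotomy (g ω) 0 with hgω | hgω | hgω
  · right
    simp only [mem_ofPred_eq, indicator_of_mem (show ω ∈ Aneg from hgω)]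
    nlinarith
  · simp [hgω] at hω
  · left
    simp only [mem_ofPred_eq, indicator_of_mem (show ω ∈ Apos from hgω)]
    exact pos_of_mul_pos_right hω hgω.le

end Gains

def IncrementsMemLzeroPM (μ : Measure Ω) (ℱ : Filtration ℝ≥0 m0) (X : ℝ≥0 → Ω → ℝ)
    (h : ℝ≥0) : Prop :=
  ∀ (τ0 τ1 : Ω → ℝ≥0)
    (hτ0 : IsStoppingTime ℱ (fun ω => (τ0 ω : WithTop ℝ≥0)))
    (_hτ1 : IsStoppingTime ℱ (fun ω => (τ1 ω : WithTop ℝ≥0))),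
    (∃ T : ℝ≥0, ∀ ω, τ0 ω ≤ T) → (∃ T : ℝ≥0, ∀ ω, τ1 ω ≤ T) →
    (∀ ω, τ0 ω + h ≤ τ1 ω) →
    ∀ A : Set Ω, MeasurableSet[hτ0.measurableSpace] A →
      MemLzeroPM μ (A.indicator fun ω => X (τ1 ω) ω - X (τ0 ω) ω)

namespace SimpleStrategy

variable {ℱ : Filtration ℝ≥0 m0}

/-- The strategy `g 1_{(τ₀, τ₁]}`. -/
def oneStep {τ0 τ1 : Ω → ℝ≥0} (hτ0 : IsStoppingTime ℱ (fun ω => (τ0 ω : WithTop ℝ≥0)))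
    (hτ1 : IsStoppingTime ℱ (fun ω => (τ1 ω : WithTop ℝ≥0))) (hle : ∀ ω, τ0 ω ≤ τ1 ω)
    (hbdd : ∃ T : ℝ≥0, ∀ ω, τ1 ω ≤ T) {g : Ω → ℝ} (hg : Measurable[hτ0.measurableSpace] g) :
    SimpleStrategy ℱ where
  n := 2
  two_le := le_rfl
  g0 := 0
  τ j := if j ≤ 1 then τ0 else τ1
  g j := if j = 1 then g else 0
  stopping j _ _ := by
    split_ifs
    exacts [hτ0, hτ1]
  mono j h1 h2 ω := by
    obtain rfl : j = 1 := by omega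
    exact hle ω
  bounded := hbdd
  g_meas j h1 h2 := by
    obtain rfl : j = 1 := by omega
    exact hg

section OneStep

variable {τ0 τ1 : Ω → ℝ≥0} {hτ0 : IsStoppingTime ℱ (fun ω => (τ0 ω : WithTop ℝ≥0))}
  {hτ1 : IsStoppingTime ℱ (fun ω => (τ1 ω : WithTop ℝ≥0))} {hle : ∀ ω, τ0 ω ≤ τ1 ω}
  {hbdd : ∃ T : ℝ≥0, ∀ ω, τ1 ω ≤ T} {g : Ω → ℝ} {hg : Measurable[hτ0.measurableSpace] g}

@[simp]
lemma gains_oneStep (X : ℝ≥0 → Ω → ℝ) (ω : Ω) :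
    (oneStep hτ0 hτ1 hle hbdd hg).gains X ω = g ω * (X (τ1 ω) ω - X (τ0 ω) ω) := by
  simp [gains, oneStep]

lemma spaced_oneStep {h : ℝ≥0} (hspaced : ∀ ω, τ0 ω + h ≤ τ1 ω) :
    (oneStep hτ0 hτ1 hle hbdd hg).Spaced h := by
  intro j h1 (h2 : j < 2) ω
  obtain rfl : j = 1 := by omega
  exact hspaced ω

end OneStep

variable (H : SimpleStrategy ℱ)

lemma τ_le_τ {i j : ℕ} (hi : 1 ≤ i) (hij : i ≤ j) (hj : j ≤ H.n) (ω : Ω) :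
    H.τ i ω ≤ H.τ j ω := by
  induction j, hij using Nat.le_induction with
  | base => exact le_rfl
  | succ j hij ih => exact (ih (by omega)).trans (H.mono j (hi.trans hij) (by omega) ω)

lemma exists_τ_le {j : ℕ} (hj : 1 ≤ j) (hjn : j ≤ H.n) : ∃ T : ℝ≥0, ∀ ω, H.τ j ω ≤ T :=
  let ⟨T, hT⟩ := H.bounded
  ⟨T, fun ω => (H.τ_le_τ hj hjn le_rfl ω).trans (hT ω)⟩

lemma measurableSpace_stopping_mono {i j : ℕ} (hi : 1 ≤ i) (hij : i ≤ j) (hj : j ≤ H.n) :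
    (H.stopping i hi (hij.trans hj)).measurableSpace ≤
      (H.stopping j (hi.trans hij) hj).measurableSpace :=
  IsStoppingTime.measurableSpace_mono _ _ fun ω => WithTop.coe_le_coe.2 (H.τ_le_τ hi hij hj ω)

lemma measurable_apply_τ {X : ℝ≥0 → Ω → ℝ} (hX : IsProgressive ℱ X) {i j : ℕ} (hi : 1 ≤ i)
    (hij : i ≤ j) (hj : j ≤ H.n) :
    Measurable[(H.stopping j (hi.trans hij) hj).measurableSpace] (fun ω => X (H.τ i ω) ω) :=
  (measurable_stoppedValue hX.isStronglyProgressive _).mono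
    (H.measurableSpace_stopping_mono hi hij hj) le_rfl

def partialGains (X : ℝ≥0 → Ω → ℝ) (m : ℕ) (ω : Ω) : ℝ :=
  ∑ j ∈ Finset.Ico 1 m, H.g j ω * (X (H.τ (j + 1) ω) ω - X (H.τ j ω) ω)

lemma gains_eq_partialGains (X : ℝ≥0 → Ω → ℝ) : H.gains X = H.partialGains X H.n :=
  rfl

lemma partialGains_succ (X : ℝ≥0 → Ω → ℝ) {m : ℕ} (hm : 1 ≤ m) :
    H.partialGains X (m + 1) =
      fun ω => H.partialGains X m ω + H.g m ω * (X (H.τ (m + 1) ω) ω - X (H.τ m ω) ω) :=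
  funext fun _ => Finset.sum_Ico_succ_top hm _

lemma measurable_partialGains {X : ℝ≥0 → Ω → ℝ} (hX : IsProgressive ℱ X) {m : ℕ} (hm : 1 ≤ m)
    (hmn : m ≤ H.n) :
    Measurable[(H.stopping m hm hmn).measurableSpace] (H.partialGains X m) := by
  refine Finset.measurable_sum _ fun j hj => ?_
  obtain ⟨hj1, hjm⟩ := Finset.mem_Ico.1 hj
  exact ((H.g_meas j hj1 (by omega)).mono (H.measurableSpace_stopping_mono hj1 hjm.le hmn)
    le_rfl).mul ((H.measurable_apply_τ hX (by omega) hjm hmn).sub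
      (H.measurable_apply_τ hX hj1 hjm.le hmn))

theorem not_isArbitrage_of_spaced {μ : Measure Ω} {X : ℝ≥0 → Ω → ℝ} {h : ℝ≥0}
    (hX : IsProgressive ℱ X) (hcond : IncrementsMemLzeroPM μ ℱ X h) (hH : H.Spaced h) :
    ¬ IsArbitrage μ X H := by
  rw [isArbitrage_iff, gains_eq_partialGains]
  suffices ∀ m, 1 ≤ m → m ≤ H.n → ¬ IsArbitrageGain μ (H.partialGains X m) from
    this H.n (by linarith [H.two_le]) le_rfl
  intro m hm
  induction m, hm using Nat.le_induction with
  | base => exact fun _ harb => by simpa [partialGains] using harb.2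
  | succ m hm ih =>
    intro hmn harb
    rw [partialGains_succ _ _ hm] at harb
    have hincrement := hcond _ _ (H.stopping m hm (by omega)) (H.stopping (m + 1) (by omega) hmn)
      (H.exists_τ_le hm (by omega)) (H.exists_τ_le (by omega) hmn) (hH m hm (by omega))
    have hsize := (H.g_meas m hm (by omega)).indicator
      (H.measurable_partialGains hX hm (by omega) (measurableSet_Iic (a := 0)))
    refine not_isArbitrageGain_mul hincrement hsize ?_
    convert harb.indicator_of_add (ih (by omega)) using 2 with ω
    rw [indicator_mul_left]
    rfl

end SimpleStrategy

lemma incrementsMemLzeroPM_of_noArbitrageCC {μ : Measure Ω} {ℱ : Filtration ℝ≥0 m0}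
    {X : ℝ≥0 → Ω → ℝ} (hNA : NoArbitrageCC μ ℱ X) {h : ℝ≥0} (hh : 0 < h) :
    IncrementsMemLzeroPM μ ℱ X h := by
  intro τ0 τ1 hτ0 hτ1 _ hbdd hspaced A hA
  have hle : ∀ ω, τ0 ω ≤ τ1 ω := fun ω => le_self_add.trans (hspaced ω)
  have hscaled : ∀ c : ℝ, ¬ IsArbitrageGain μ
      (fun ω => c * A.indicator (fun ω => X (τ1 ω) ω - X (τ0 ω) ω) ω) := by
    intro c harb
    have hg : Measurable[hτ0.measurableSpace] (A.indicator fun _ => c) :=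
      measurable_const.indicator hA
    refine hNA ⟨h, .oneStep hτ0 hτ1 hle hbdd hg, hh, SimpleStrategy.spaced_oneStep hspaced, ?_⟩
    rw [isArbitrage_iff]
    convert harb using 2 with ω
    by_cases hω : ω ∈ A <;> simp [hω]
  rw [memLzeroPM_iff]
  exact ⟨by simpa using hscaled 1, by simpa using hscaled (-1)⟩

theorem stmt0_general (μ : MeasureTheory.Measure Ω)
    (ℱ : MeasureTheory.Filtration ℝ≥0 m0)
    (X : ℝ≥0 → Ω → ℝ) (hadapted : MeasureTheory.Adapted ℱ X) (hcadlag : IsCadlag X) :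
    NoArbitrageCC μ ℱ X ↔
      ∀ (h : ℝ≥0), 0 < h →
        ∀ (τ0 τ1 : Ω → ℝ≥0)
          (hτ0 : MeasureTheory.IsStoppingTime ℱ (fun ω => (τ0 ω : WithTop ℝ≥0)))
          (_hτ1 : MeasureTheory.IsStoppingTime ℱ (fun ω => (τ1 ω : WithTop ℝ≥0))),
          (∃ T : ℝ≥0, ∀ ω, τ0 ω ≤ T) → (∃ T : ℝ≥0, ∀ ω, τ1 ω ≤ T) →
          (∀ ω, τ0 ω + h ≤ τ1 ω) →
          ∀ A : Set Ω, MeasurableSet[hτ0.measurableSpace] A →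
            MemLzeroPM μ (A.indicator fun ω => X (τ1 ω) ω - X (τ0 ω) ω) := by
  have hX : IsProgressive ℱ X :=
    hadapted.isProgressive_of_continuousWithinAt_Ici fun ω => (hcadlag ω).1
  refine ⟨fun hNA h hh => incrementsMemLzeroPM_of_noArbitrageCC hNA hh, ?_⟩
  rintro hcond ⟨h, H, hh, hH, harb⟩
  exact H.not_isArbitrage_of_spaced hX (hcond h hh) hH harb

/-- **Lemma 1.** A càdlàg adapted process `X` has no arbitrage in the Cheridito class
`Π(𝔽)` iff for every `h > 0`, every pair of bounded stopping times `τ₀, τ₁` with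
`τ₁ ≥ τ₀ + h` and every `A ∈ F_{τ₀}`, `1_A (X_{τ₁} - X_{τ₀}) ∈ L⁰_{+-}`. -/
theorem stmt0 (μ : MeasureTheory.Measure Ω) [MeasureTheory.IsProbabilityMeasure μ]
    (ℱ : MeasureTheory.Filtration ℝ≥0 m0)
    (X : ℝ≥0 → Ω → ℝ) (hadapted : MeasureTheory.Adapted ℱ X) (hcadlag : IsCadlag X) :
    NoArbitrageCC μ ℱ X ↔
      ∀ (h : ℝ≥0), 0 < h →
        ∀ (τ0 τ1 : Ω → ℝ≥0)
          (hτ0 : MeasureTheory.IsStoppingTime ℱ (fun ω => (τ0 ω : WithTop ℝ≥0)))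
          (_hτ1 : MeasureTheory.IsStoppingTime ℱ (fun ω => (τ1 ω : WithTop ℝ≥0))),
          (∃ T : ℝ≥0, ∀ ω, τ0 ω ≤ T) → (∃ T : ℝ≥0, ∀ ω, τ1 ω ≤ T) →
          (∀ ω, τ0 ω + h ≤ τ1 ω) →
          ∀ A : Set Ω, MeasurableSet[hτ0.measurableSpace] A →
            MemLzeroPM μ (A.indicator fun ω => X (τ1 ω) ω - X (τ0 ω) ω) :=
  stmt0_general μ ℱ X hadapted hcadlag
end

section
/- Let X = (X_t)_{t≥0} be a continuous process adapted to 𝔽. Suppose that for every bounded 𝔽-stopping time τ, every A ∈ F_τ with P(A) > 0, every 0 < δ < T < ∞, and every C > 0, one has P(A ∩ {sup_{t∈[δ,T]} (X_{τ+t} − X_τ) < −C}) > 0 and P(A ∩ {inf_{t∈[δ,T]} (X_{τ+t} − X_τ) > C}) > 0. Then for every bounded 𝔽-adapted process V, the process Y = X + V has no arbitrage in the Cheridito class Π(𝔽). -/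
open MeasureTheory ProbabilityTheory Filter Set
open scoped NNReal ENNReal

variable {Ω : Type*} {m0 : MeasurableSpace Ω}

/-! Backward induction over the trading dates of a strategy `H ∈ Sʰ(𝔽)`. Let `R_k` be the gains
from date `k` on; one shows that `R_k ≥ 0` a.s. on an event `B ∈ F_{τ_k}` forces `R_k = 0` a.s. on
`B`. If the position `g_k` were positive on a non-null part of `B`, the hypothesis on `X` (with
`δ = h`) gives a non-null event in `F_{τ_{k+1}}` on which `X` falls by more than `V` can move over
the period, so `Y` falls too and the later gains `R_{k+1}` must be strictly positive there,
against the induction hypothesis; symmetrically if `g_k < 0`. Hence `g_k = 0` a.s. on `B`. -/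

section ConditionalNoArbitrage

variable {μ : Measure Ω}

def NoArbitrageGiven (μ : Measure Ω) (m : MeasurableSpace Ω) (R : Ω → ℝ) : Prop :=
  ∀ B, MeasurableSet[m] B → (∀ᵐ ω ∂μ, ω ∈ B → 0 ≤ R ω) → ∀ᵐ ω ∂μ, ω ∈ B → R ω = 0

def ExceedsBothWays (μ : Measure Ω) (m m' : MeasurableSpace Ω) (Δ : Ω → ℝ) (C : ℝ) : Prop :=
  ∀ A, MeasurableSet[m] A → 0 < μ A →
    (∃ D ⊆ A, MeasurableSet[m'] D ∧ 0 < μ D ∧ ∀ ω ∈ D, Δ ω < -C) ∧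
    (∃ D ⊆ A, MeasurableSet[m'] D ∧ 0 < μ D ∧ ∀ ω ∈ D, C < Δ ω)

theorem NoArbitrageGiven.measure_eq_zero {m : MeasurableSpace Ω} {R : Ω → ℝ}
    (hR : NoArbitrageGiven μ m R) {D : Set Ω} (hD : MeasurableSet[m] D)
    (hpos : ∀ᵐ ω ∂μ, ω ∈ D → 0 < R ω) : μ D = 0 := by
  have hzero := hR D hD (by filter_upwards [hpos] with ω hω hωD using (hω hωD).le)
  refine measure_eq_zero_iff_ae_notMem.2 ?_
  filter_upwards [hpos, hzero] with ω hpos hzero hωD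
  exact (hpos hωD).ne' (hzero hωD)

theorem ExceedsBothWays.add_of_abs_le {m m' : MeasurableSpace Ω} {Δ E : Ω → ℝ} {C : ℝ}
    (hΔ : ExceedsBothWays μ m m' Δ C) (hE : ∀ ω, |E ω| ≤ C) :
    ExceedsBothWays μ m m' (fun ω => Δ ω + E ω) 0 := by
  intro A hA hpos
  obtain ⟨⟨D, hDA, hD, hDμ, hlow⟩, ⟨D', hDA', hD', hDμ', hhigh⟩⟩ := hΔ A hA hpos
  refine ⟨⟨D, hDA, hD, hDμ, fun ω hω => ?_⟩, ⟨D', hDA', hD', hDμ', fun ω hω => ?_⟩⟩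
  · linarith [hlow ω hω, (abs_le.1 (hE ω)).2]
  · linarith [hhigh ω hω, (abs_le.1 (hE ω)).1]

theorem NoArbitrageGiven.mul_add {m m' : MeasurableSpace Ω} (hmm' : m ≤ m') {g Δ R : Ω → ℝ}
    (hg : Measurable[m] g) (hΔ : ExceedsBothWays μ m m' Δ 0) (hR : NoArbitrageGiven μ m' R) :
    NoArbitrageGiven μ m (fun ω => g ω * Δ ω + R ω) := by
  intro B hB hnonneg
  -- where `g Δ < 0` the later gains `R` would have to be positive, which `hR` rules out
  have null_of_loss : ∀ D, MeasurableSet[m'] D → D ⊆ B → (∀ ω ∈ D, g ω * Δ ω < 0) → μ D = 0 :=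
    fun D hD hDB hloss => hR.measure_eq_zero hD <| by
      filter_upwards [hnonneg] with ω hω hωD
      linarith [hω (hDB hωD), hloss ω hωD]
  have hpos : μ (B ∩ {ω | 0 < g ω}) = 0 := by
    by_contra hne
    obtain ⟨⟨D, hDA, hD, hDμ, hΔneg⟩, -⟩ :=
      hΔ _ (hB.inter (measurableSet_lt measurable_const hg)) (pos_iff_ne_zero.2 hne)
    refine hDμ.ne' (null_of_loss D hD (hDA.trans inter_subset_left) fun ω hω => ?_)
    exact mul_neg_of_pos_of_neg (hDA hω).2 (by simpa using hΔneg ω hω)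
  have hneg : μ (B ∩ {ω | g ω < 0}) = 0 := by
    by_contra hne
    obtain ⟨-, ⟨D, hDA, hD, hDμ, hΔpos⟩⟩ :=
      hΔ _ (hB.inter (measurableSet_lt hg measurable_const)) (pos_iff_ne_zero.2 hne)
    refine hDμ.ne' (null_of_loss D hD (hDA.trans inter_subset_left) fun ω hω => ?_)
    exact mul_neg_of_neg_of_pos (hDA hω).2 (hΔpos ω hω)
  have hg0 : ∀ᵐ ω ∂μ, ω ∈ B → g ω = 0 := by
    filter_upwards [measure_eq_zero_iff_ae_notMem.1 (measure_union_null hpos hneg)] with ω hω hωB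
    by_contra hne
    rcases lt_or_gt_of_ne hne with hlt | hgt
    · exact hω (Or.inr ⟨hωB, hlt⟩)
    · exact hω (Or.inl ⟨hωB, hgt⟩)
  have hR0 := hR B (hmm' B hB) <| by
    filter_upwards [hnonneg, hg0] with ω hω hg0 hωB
    simpa [hg0 hωB] using hω hωB
  filter_upwards [hg0, hR0] with ω hg0 hR0 hωB
  simp [hg0 hωB, hR0 hωB]

end ConditionalNoArbitrage

namespace SimpleStrategy

variable {ℱ : Filtration ℝ≥0 m0} {μ : Measure Ω}

def gainsFrom (H : SimpleStrategy ℱ) (X : ℝ≥0 → Ω → ℝ) (k : ℕ) (ω : Ω) : ℝ :=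
  ∑ j ∈ Finset.Ico k H.n, H.g j ω * (X (H.τ (j + 1) ω) ω - X (H.τ j ω) ω)

theorem gainsFrom_of_lt (H : SimpleStrategy ℱ) (X : ℝ≥0 → Ω → ℝ) {k : ℕ} (hk : k < H.n) :
    H.gainsFrom X k = fun ω =>
      H.g k ω * (X (H.τ (k + 1) ω) ω - X (H.τ k ω) ω) + H.gainsFrom X (k + 1) ω :=
  funext fun _ => Finset.sum_eq_sum_Ico_succ_bot hk _

theorem τ_le_τ_n (H : SimpleStrategy ℱ) {j : ℕ} (hj : 1 ≤ j) (hjn : j ≤ H.n) (ω : Ω) :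
    H.τ j ω ≤ H.τ H.n ω := by
  induction hjn using Nat.decreasingInduction with
  | self => exact le_rfl
  | of_succ k hk ih => exact (H.mono k hj hk ω).trans (ih (by omega))

theorem noArbitrageGiven_gainsFrom (H : SimpleStrategy ℱ) (X : ℝ≥0 → Ω → ℝ)
    (hX : ∀ k (hk : 1 ≤ k) (hkn : k < H.n),
      ExceedsBothWays μ (H.stopping k hk hkn.le).measurableSpace
        (H.stopping (k + 1) (hk.trans k.le_succ) hkn).measurableSpace
        (fun ω => X (H.τ (k + 1) ω) ω - X (H.τ k ω) ω) 0)
    {k : ℕ} (hk : 1 ≤ k) (hkn : k ≤ H.n) :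
    NoArbitrageGiven μ (H.stopping k hk hkn).measurableSpace (H.gainsFrom X k) := by
  induction hkn using Nat.decreasingInduction with
  | self =>
    intro B _ _
    simp [gainsFrom]
  | of_succ k hkn ih =>
    rw [H.gainsFrom_of_lt X hkn]
    have hmono := IsStoppingTime.measurableSpace_mono (H.stopping k hk hkn.le)
      (H.stopping (k + 1) (hk.trans k.le_succ) hkn)
      fun ω => WithTop.coe_le_coe.2 (H.mono k hk hkn ω)
    exact NoArbitrageGiven.mul_add hmono (H.g_meas k hk hkn) (hX k hk hkn) (ih (hk.trans k.le_succ))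

theorem not_isArbitrage (H : SimpleStrategy ℱ) (X : ℝ≥0 → Ω → ℝ)
    (hX : ∀ k (hk : 1 ≤ k) (hkn : k < H.n),
      ExceedsBothWays μ (H.stopping k hk hkn.le).measurableSpace
        (H.stopping (k + 1) (hk.trans k.le_succ) hkn).measurableSpace
        (fun ω => X (H.τ (k + 1) ω) ω - X (H.τ k ω) ω) 0) :
    ¬ IsArbitrage μ X H := by
  rintro ⟨hnonneg, hpos⟩
  have hzero := H.noArbitrageGiven_gainsFrom X hX le_rfl (one_le_two.trans H.two_le) univ
    MeasurableSet.univ (by filter_upwards [hnonneg] with ω hω _ using hω)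
  refine hpos.ne' (measure_eq_zero_iff_ae_notMem.2 ?_)
  filter_upwards [hzero] with ω hω hgain
  exact hgain.ne' (hω trivial)

end SimpleStrategy

theorem exceedsBothWays_increment {ℱ : Filtration ℝ≥0 m0} {μ : Measure Ω} {X : ℝ≥0 → Ω → ℝ}
    (hX : IsStronglyProgressive ℱ X) (hcont : ∀ ω, Continuous fun t => X t ω) {σ ρ : Ω → ℝ≥0}
    (hσ : IsStoppingTime ℱ fun ω => (σ ω : WithTop ℝ≥0))
    (hρ : IsStoppingTime ℱ fun ω => (ρ ω : WithTop ℝ≥0)) {δ T : ℝ≥0}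
    (hδ : ∀ ω, σ ω + δ ≤ ρ ω) (hT : ∀ ω, ρ ω ≤ σ ω + T) {C : ℝ}
    (hσX : ∀ A, MeasurableSet[hσ.measurableSpace] A → 0 < μ A →
      0 < μ (A ∩ {ω | sSup ((fun t => X (σ ω + t) ω - X (σ ω) ω) '' Icc δ T) < -C}) ∧
      0 < μ (A ∩ {ω | C < sInf ((fun t => X (σ ω + t) ω - X (σ ω) ω) '' Icc δ T)})) :
    ExceedsBothWays μ hσ.measurableSpace hρ.measurableSpace
      (fun ω => X (ρ ω) ω - X (σ ω) ω) C := by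
  have hσρ : ∀ ω, σ ω ≤ ρ ω := fun ω => le_self_add.trans (hδ ω)
  have hσ_le_ρ : hσ.measurableSpace ≤ hρ.measurableSpace :=
    hσ.measurableSpace_mono hρ fun ω => WithTop.coe_le_coe.2 (hσρ ω)
  have hmeas : Measurable[hρ.measurableSpace] fun ω => X (ρ ω) ω - X (σ ω) ω :=
    (measurable_stoppedValue hX hρ).sub ((measurable_stoppedValue hX hσ).mono hσ_le_ρ le_rfl)
  have hmem : ∀ ω, X (ρ ω) ω - X (σ ω) ω ∈
      (fun t => X (σ ω + t) ω - X (σ ω) ω) '' Icc δ T := fun ω =>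
    ⟨ρ ω - σ ω, ⟨le_tsub_of_add_le_left (hδ ω), tsub_le_iff_left.2 (hT ω)⟩,
      by simp only [add_tsub_cancel_of_le (hσρ ω)]⟩
  have hcompact : ∀ ω, IsCompact ((fun t => X (σ ω + t) ω - X (σ ω) ω) '' Icc δ T) := fun ω =>
    isCompact_Icc.image (((hcont ω).comp (continuous_const_add _)).sub continuous_const)
  intro A hA hpos
  obtain ⟨hdown, hup⟩ := hσX A hA hpos
  refine ⟨⟨A ∩ {ω | X (ρ ω) ω - X (σ ω) ω < -C}, inter_subset_left,
      (hσ_le_ρ _ hA).inter (hmeas measurableSet_Iio), hdown.trans_le (measure_mono ?_),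
      fun ω hω => hω.2⟩,
    ⟨A ∩ {ω | C < X (ρ ω) ω - X (σ ω) ω}, inter_subset_left,
      (hσ_le_ρ _ hA).inter (hmeas measurableSet_Ioi), hup.trans_le (measure_mono ?_),
      fun ω hω => hω.2⟩⟩
  · exact inter_subset_inter_right _ fun ω hω =>
      (le_csSup (hcompact ω).bddAbove (hmem ω)).trans_lt hω
  · exact inter_subset_inter_right _ fun ω hω =>
      hω.trans_le (csInf_le (hcompact ω).bddBelow (hmem ω))

theorem stmt8_general (μ : MeasureTheory.Measure Ω)
    (ℱ : MeasureTheory.Filtration ℝ≥0 m0)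
    (X : ℝ≥0 → Ω → ℝ) (hadapted : MeasureTheory.Adapted ℱ X)
    (hcont : ∀ ω, Continuous fun t => X t ω)
    (hyp : ∀ (τ : Ω → ℝ≥0) (hτ : MeasureTheory.IsStoppingTime ℱ (fun ω => (τ ω : WithTop ℝ≥0))),
      (∃ T : ℝ≥0, ∀ ω, τ ω ≤ T) →
      ∀ A : Set Ω, MeasurableSet[hτ.measurableSpace] A → 0 < μ A →
      ∀ δ T : ℝ≥0, 0 < δ → δ < T → ∀ C : ℝ, 0 < C →
        0 < μ (A ∩ {ω | sSup ((fun t => X (τ ω + t) ω - X (τ ω) ω) '' Set.Icc δ T) < -C}) ∧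
        0 < μ (A ∩ {ω | C < sInf ((fun t => X (τ ω + t) ω - X (τ ω) ω) '' Set.Icc δ T)}))
    (V : ℝ≥0 → Ω → ℝ)
    (hVbdd : ∃ K : ℝ, ∀ t ω, |V t ω| ≤ K) :
    NoArbitrageCC μ ℱ (fun t ω => X t ω + V t ω) := by
  rintro ⟨h, H, hh, hspaced, harb⟩
  obtain ⟨T, hT⟩ := H.bounded
  obtain ⟨K, hK⟩ := hVbdd
  have hX : IsStronglyProgressive ℱ X :=
    StronglyAdapted.isStronglyProgressive_of_continuous
      (fun t => (hadapted t).stronglyMeasurable) hcont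
  set C : ℝ := 2 * |K| + 1
  have hV : ∀ s t ω, |V t ω - V s ω| ≤ C := fun s t ω => by
    linarith [abs_sub (V t ω) (V s ω), hK t ω, hK s ω, le_abs_self K]
  refine H.not_isArbitrage _ (fun k hk hkn => ?_) harb
  have hτT : ∀ ω, H.τ (k + 1) ω ≤ H.τ k ω + (T + 2 * h) := fun ω =>
    ((H.τ_le_τ_n (hk.trans k.le_succ) hkn ω).trans (hT ω)).trans (le_add_left le_self_add)
  have hXk := exceedsBothWays_increment hX hcont (H.stopping k hk hkn.le)
    (H.stopping (k + 1) (hk.trans k.le_succ) hkn) (hspaced k hk hkn) hτT fun A hA hpos =>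
    hyp _ _ ⟨T, fun ω => (H.τ_le_τ_n hk hkn.le ω).trans (hT ω)⟩ A hA hpos h (T + 2 * h) hh
      (by rw [two_mul, ← add_assoc]; exact lt_add_of_pos_left _ (by positivity)) C (by positivity)
  simpa only [add_sub_add_comm] using hXk.add_of_abs_le fun ω => hV _ _ ω

/-- **Lemma 4.** If, after every bounded stopping time `τ` and on every positive-probability
event `A ∈ F_τ`, the increments `X_{τ+t} - X_τ` for `t ∈ [δ, T]` go uniformly below `-C`
and uniformly above `C` with positive probability, then `Y = X + V` has no arbitrage in
`Π(𝔽)` for every bounded adapted process `V`. -/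
theorem stmt8 (μ : MeasureTheory.Measure Ω) [MeasureTheory.IsProbabilityMeasure μ]
    (ℱ : MeasureTheory.Filtration ℝ≥0 m0)
    (X : ℝ≥0 → Ω → ℝ) (hadapted : MeasureTheory.Adapted ℱ X)
    (hcont : ∀ ω, Continuous fun t => X t ω)
    (hyp : ∀ (τ : Ω → ℝ≥0) (hτ : MeasureTheory.IsStoppingTime ℱ (fun ω => (τ ω : WithTop ℝ≥0))),
      (∃ T : ℝ≥0, ∀ ω, τ ω ≤ T) →
      ∀ A : Set Ω, MeasurableSet[hτ.measurableSpace] A → 0 < μ A →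
      ∀ δ T : ℝ≥0, 0 < δ → δ < T → ∀ C : ℝ, 0 < C →
        0 < μ (A ∩ {ω | sSup ((fun t => X (τ ω + t) ω - X (τ ω) ω) '' Set.Icc δ T) < -C}) ∧
        0 < μ (A ∩ {ω | C < sInf ((fun t => X (τ ω + t) ω - X (τ ω) ω) '' Set.Icc δ T)}))
    (V : ℝ≥0 → Ω → ℝ) (hVadapted : MeasureTheory.Adapted ℱ V)
    (hVbdd : ∃ K : ℝ, ∀ t ω, |V t ω| ≤ K) :
    NoArbitrageCC μ ℱ (fun t ω => X t ω + V t ω) :=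
  stmt8_general μ ℱ X hadapted hcont hyp V hVbdd
end
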